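/- Let q be a real number with q ≥ 2 (in the paper, a prime power), and let h ≥ 3 and t be integers with t ≥ h. Then Σ_{i=0}^{h-1} (q^t + q^(t-1)/(h-1))^i ≤ (q^((h-1)t+1) - 1)/(q - 1). -/

import Mathlib

/-! Expanding binomially, `(q^t + q^(t-1)/(h-1))^i` is a sum of terms
`C(i,k) q^(tk + (t-1)(i-k)) / (h-1)^(i-k)`, and `C(i,k) ≤ i^(i-k) ≤ (h-1)^(i-k)`, so it is at most
`∑_{k ≤ i} q^((t-1)i + k)`. For `t ≥ h` the exponents `(t-1)i + k` with `k ≤ i < h` are pairwise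
distinct and at most `(h-1)t`, so the whole sum is bounded by the geometric sum `∑_{j ≤ (h-1)t} q^j`. -/

open Finset

theorem add_div_pow_le_sum_pow_mul_pow {a b c : ℝ} (ha : 0 ≤ a) (hb : 0 ≤ b) {i : ℕ}
    (hic : (i : ℝ) ≤ c) :
    (a + b / c) ^ i ≤ ∑ k ∈ range (i + 1), a ^ k * b ^ (i - k) := by
  rw [add_pow]
  refine sum_le_sum fun k hk => ?_
  have hki : k ≤ i := Nat.lt_succ_iff.mp (mem_range.mp hk)
  have hchoose : (i.choose k : ℝ) ≤ c ^ (i - k) :=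
    calc (i.choose k : ℝ) = i.choose (i - k) := by rw [Nat.choose_symm hki]
      _ ≤ (i : ℝ) ^ (i - k) := by exact_mod_cast Nat.choose_le_pow i (i - k)
      _ ≤ c ^ (i - k) := pow_le_pow_left₀ (Nat.cast_nonneg i) hic (i - k)
  calc a ^ k * (b / c) ^ (i - k) * i.choose k
      = a ^ k * b ^ (i - k) * (i.choose k / c ^ (i - k)) := by rw [div_pow]; ring
    _ ≤ a ^ k * b ^ (i - k) * 1 := by
      gcongr
      exact div_le_one_of_le₀ hchoose (pow_nonneg ((Nat.cast_nonneg i).trans hic) _)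
    _ = a ^ k * b ^ (i - k) := mul_one _

theorem sum_pow_le_geom_sum_of_injOn {ι : Type*} {s : Finset ι} {q : ℝ} (hq : 0 ≤ q)
    {e : ι → ℕ} {n : ℕ} (he : Set.InjOn e s) (hlt : ∀ x ∈ s, e x < n) :
    ∑ x ∈ s, q ^ e x ≤ ∑ j ∈ range n, q ^ j := by
  rw [← sum_image he]
  refine sum_le_sum_of_subset_of_nonneg ?_ fun j _ _ => pow_nonneg hq j
  simpa [subset_iff] using hlt

theorem injOn_sub_one_mul_add (t : ℕ) :
    Set.InjOn (fun p : Σ _ : ℕ, ℕ => (t - 1) * p.1 + p.2)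
      ((range t).sigma fun i => range (i + 1)) := by
  have strictMono_fst : ∀ i k i' k' : ℕ, k ≤ i → i < i' → i' < t →
      (t - 1) * i + k < (t - 1) * i' + k' := by
    intro i k i' k' hk hii' hi't
    have : (t - 1) * (i + 1) ≤ (t - 1) * i' := Nat.mul_le_mul_left _ hii'
    rw [Nat.mul_succ] at this
    omega
  rintro ⟨i, k⟩ hik ⟨i', k'⟩ hik' heq
  simp only [coe_sigma, Set.mem_sigma_iff, coe_range, Set.mem_Iio] at hik hik' heq
  obtain ⟨hi, hk⟩ := hik
  obtain ⟨hi', hk'⟩ := hik'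
  obtain rfl : i = i' := by
    rcases lt_trichotomy i i' with hlt | rfl | hgt
    · exact absurd heq (strictMono_fst i k i' k' (by omega) hlt hi').ne
    · rfl
    · exact absurd heq (strictMono_fst i' k' i k (by omega) hgt hi).ne'
  obtain rfl : k = k' := by omega
  rfl

theorem pow_mul_pow_sub_one_pow {M : Type*} [Monoid M] (x : M) {t i k : ℕ} (ht : 1 ≤ t)
    (hki : k ≤ i) :
    (x ^ t) ^ k * (x ^ (t - 1)) ^ (i - k) = x ^ ((t - 1) * i + k) := by
  obtain ⟨d, rfl⟩ : ∃ d, i = k + d := ⟨i - k, by omega⟩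
  obtain ⟨u, rfl⟩ : ∃ u, t = u + 1 := ⟨t - 1, by omega⟩
  simp only [← pow_mul, ← pow_add, Nat.add_sub_cancel, Nat.add_sub_cancel_left]
  ring_nf

theorem sub_one_mul_add_lt {h t i k : ℕ} (hki : k ≤ i) (hih : i < h) (ht : h ≤ t) :
    (t - 1) * i + k < (h - 1) * t + 1 := by
  have hmul : t * i ≤ t * (h - 1) := Nat.mul_le_mul_left t (by omega)
  have hsucc : (t - 1) * i + i = t * i := by
    rw [← Nat.succ_mul, Nat.succ_eq_add_one, Nat.sub_add_cancel (by omega)]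
  rw [Nat.mul_comm (h - 1)]
  omega

theorem stmt_9_general (q : ℝ) (hq : 2 ≤ q) (h t : ℕ) (ht : h ≤ t) :
    ∑ i ∈ Finset.range h, (q ^ t + q ^ (t - 1) / ((h : ℝ) - 1)) ^ i ≤
      (q ^ ((h - 1) * t + 1) - 1) / (q - 1) := by
  set s := (range h).sigma fun i => range (i + 1)
  have hs : ∀ p ∈ s, p.2 ≤ p.1 ∧ p.1 < h := by
    intro p hp
    simp only [s, mem_sigma, mem_range, Nat.lt_succ_iff] at hp
    exact ⟨hp.2, hp.1⟩
  calc ∑ i ∈ range h, (q ^ t + q ^ (t - 1) / ((h : ℝ) - 1)) ^ i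
      ≤ ∑ i ∈ range h, ∑ k ∈ range (i + 1), (q ^ t) ^ k * (q ^ (t - 1)) ^ (i - k) :=
        sum_le_sum fun i hi => add_div_pow_le_sum_pow_mul_pow (by positivity) (by positivity) <| by
          have : (i : ℝ) + 1 ≤ h := by exact_mod_cast mem_range.mp hi
          linarith
    _ = ∑ p ∈ s, q ^ ((t - 1) * p.1 + p.2) := by
        rw [sum_sigma']
        exact sum_congr rfl fun p hp =>
          pow_mul_pow_sub_one_pow q (Nat.one_le_of_lt ((hs p hp).2.trans_le ht)) (hs p hp).1
    _ ≤ ∑ j ∈ range ((h - 1) * t + 1), q ^ j :=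
        sum_pow_le_geom_sum_of_injOn (by positivity)
          ((injOn_sub_one_mul_add t).mono (sigma_mono (range_subset_range.mpr ht) fun _ => subset_rfl))
          fun p hp => sub_one_mul_add_lt (hs p hp).1 (hs p hp).2 ht
    _ = (q ^ ((h - 1) * t + 1) - 1) / (q - 1) := geom_sum_eq (by linarith) _

/-- For real `q ≥ 2` and integers `h ≥ 3`, `t ≥ h`:
`Σ_{i=0}^{h-1} (q^t + q^(t-1)/(h-1))^i ≤ (q^((h-1)t+1) - 1)/(q - 1)`. -/
theorem stmt_9 (q : ℝ) (hq : 2 ≤ q) (h t : ℕ) (hh : 3 ≤ h) (ht : h ≤ t) :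
    ∑ i ∈ Finset.range h, (q ^ t + q ^ (t - 1) / ((h : ℝ) - 1)) ^ i ≤
      (q ^ ((h - 1) * t + 1) - 1) / (q - 1) :=
  stmt_9_general q hq h t ht
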